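/- arXiv:math/0502088 — 4 statements merged into one kernel-verified Lean document; each statement's English description precedes it below -/
import Mathlib

section
/- For any ℓ ≥ 1 and any paravectors u_1, …, u_ℓ in S ⊕ V ⊂ Cl(0,n), the symmetrized product E(u_1,…,u_ℓ) = (1/ℓ!) Σ_{σ ∈ S_ℓ} u_{σ(1)} ⋯ u_{σ(ℓ)} is itself a paravector, i.e., lies in S ⊕ V. -/
open CliffordAlgebra

noncomputable def Qneg (n : ℕ) : QuadraticForm ℝ (Fin n → ℝ) :=
  QuadraticMap.weightedSumSquares ℝ (fun _ : Fin n => (-1 : ℝ))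

/-- The paravector subspace `S ⊕ V` of `Cl(0,n)`. -/
noncomputable def Paravector (n : ℕ) : Submodule ℝ (CliffordAlgebra (Qneg n)) :=
  Submodule.span ℝ {1} ⊔ LinearMap.range (ι (Qneg n))

/-- symmetrized product of a tuple -/
noncomputable def symE {A : Type*} [Ring A] [Algebra ℝ A] {ℓ : ℕ} (u : Fin ℓ → A) : A :=
  ((ℓ.factorial : ℝ)⁻¹) • ∑ σ : Equiv.Perm (Fin ℓ), (List.ofFn fun i => u (σ i)).prod

/-- symmetrized product of a list -/
noncomputable def symL {A : Type*} [Ring A] [Algebra ℝ A] (L : List A) : A :=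
  ((L.length.factorial : ℝ)⁻¹) •
    ∑ σ : Equiv.Perm (Fin L.length), (List.ofFn fun i => L.get (σ i)).prod

/-!
Write `S(u) = ∑_σ u_{σ 1} ⋯ u_{σ ℓ}`. Expanding along the first factor gives
`S(u) = ∑_p u_p T_p`, where each `T_p` is the symmetrized sum of the remaining entries and is a
paravector by induction. Paravectors are fixed by the reversion anti-automorphism, and reversion
permutes the terms of `S(u)`, so also `S(u) = ∑_p T_p u_p`. Hence
`2 S(u) = ∑_p (u_p T_p + T_p u_p)`, and the anticommutator of two paravectors is again a
paravector because `a b + b a` is a scalar for vectors `a, b`.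
-/

open MulOpposite

section SymmetrizedSum

variable {A : Type*} [Semiring A]

def symSum {m : ℕ} (u : Fin m → A) : A :=
  ∑ σ : Equiv.Perm (Fin m), (List.ofFn fun i => u (σ i)).prod

@[simp]
theorem symSum_zero (u : Fin 0 → A) : symSum u = 1 := by
  simp [symSum]

theorem symSum_succ {m : ℕ} (u : Fin (m + 1) → A) :
    symSum u = ∑ p, u p * symSum fun i : Fin m => u (Equiv.swap 0 p i.succ) := by
  rw [symSum, ← Equiv.sum_comp (Equiv.Perm.decomposeFin (n := m)).symm, Fintype.sum_prod_type]
  refine Finset.sum_congr rfl fun p _ => ?_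
  rw [symSum, Finset.mul_sum]
  refine Finset.sum_congr rfl fun e _ => ?_
  simp [List.ofFn_succ]

theorem List.ofFn_rev {α : Type*} {m : ℕ} (f : Fin m → α) :
    List.ofFn (fun i => f i.rev) = (List.ofFn f).reverse := by
  apply List.ext_getElem (by simp)
  intro i h _
  simp only [List.length_ofFn] at h
  simp [Fin.rev, Nat.sub_sub, Nat.add_comm 1 i]

/-- Reversing every product only permutes the terms of the sum, by `σ ↦ σ * Fin.revPerm`. -/
theorem map_symSum_of_forall_eq_op {m : ℕ} (f : A →+* Aᵐᵒᵖ) (u : Fin m → A)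
    (hu : ∀ i, f (u i) = op (u i)) : f (symSum u) = op (symSum u) := by
  rw [symSum, map_sum, Finset.op_sum, ← Equiv.sum_comp (Equiv.mulRight Fin.revPerm)]
  refine Finset.sum_congr rfl fun σ _ => ?_
  rw [map_list_prod, op_list_prod, List.map_ofFn, List.map_ofFn, ← List.ofFn_rev]
  simp [Function.comp_def, hu]

end SymmetrizedSum

namespace CliffordAlgebra

variable {R M : Type*} [CommRing R] [AddCommGroup M] [Module R M] {Q : QuadraticForm R M}

variable (Q) in
def paravectors : Submodule R (CliffordAlgebra Q) :=
  Submodule.span R {1} ⊔ LinearMap.range (ι Q)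

theorem mem_paravectors_iff {x : CliffordAlgebra Q} :
    x ∈ paravectors Q ↔ ∃ (r : R) (m : M), x = algebraMap R _ r + ι Q m := by
  simp only [paravectors, Submodule.mem_sup, Submodule.mem_span_singleton, LinearMap.mem_range,
    Algebra.algebraMap_eq_smul_one]
  constructor
  · rintro ⟨_, ⟨r, rfl⟩, _, ⟨m, rfl⟩, rfl⟩
    exact ⟨r, m, rfl⟩
  · rintro ⟨r, m, rfl⟩
    exact ⟨_, ⟨r, rfl⟩, _, ⟨m, rfl⟩, rfl⟩

theorem one_mem_paravectors : (1 : CliffordAlgebra Q) ∈ paravectors Q :=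
  Submodule.mem_sup_left (Submodule.mem_span_singleton_self 1)

theorem reverseOp_of_mem_paravectors {x : CliffordAlgebra Q} (hx : x ∈ paravectors Q) :
    reverseOp x = op x := by
  obtain ⟨r, m, rfl⟩ := mem_paravectors_iff.1 hx
  simp [reverseOp_ι]

theorem mul_add_mul_mem_paravectors {x y : CliffordAlgebra Q} (hx : x ∈ paravectors Q)
    (hy : y ∈ paravectors Q) : x * y + y * x ∈ paravectors Q := by
  obtain ⟨r, a, rfl⟩ := mem_paravectors_iff.1 hx
  obtain ⟨s, b, rfl⟩ := mem_paravectors_iff.1 hy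
  refine mem_paravectors_iff.2 ⟨2 * r * s + QuadraticMap.polar Q a b, 2 • (s • a + r • b), ?_⟩
  have hba : ι Q b * ι Q a = QuadraticMap.polar Q a b • 1 - ι Q a * ι Q b := by
    rw [← Algebra.algebraMap_eq_smul_one, ← ι_mul_ι_add_swap, add_sub_cancel_left]
  simp only [Algebra.algebraMap_eq_smul_one, map_add, map_nsmul, map_smul, add_mul, mul_add,
    smul_mul_assoc, mul_smul_comm, one_mul, mul_one, hba]
  module

theorem symSum_mem_paravectors [Invertible (2 : R)] {m : ℕ} (u : Fin m → CliffordAlgebra Q)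
    (hu : ∀ i, u i ∈ paravectors Q) : symSum u ∈ paravectors Q := by
  induction m with
  | zero => simpa using one_mem_paravectors
  | succ m ih =>
    set T : Fin (m + 1) → CliffordAlgebra Q :=
      fun p => symSum fun i : Fin m => u (Equiv.swap 0 p i.succ)
    have hT : ∀ p, T p ∈ paravectors Q := fun p => ih _ fun i => hu _
    have hS_left : symSum u = ∑ p, u p * T p := symSum_succ u
    have hS_right : symSum u = ∑ p, T p * u p := by
      apply op_injective
      rw [← map_symSum_of_forall_eq_op reverseOp.toRingHom u
        (fun i => reverseOp_of_mem_paravectors (hu i))]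
      simp only [AlgHom.toRingHom_eq_coe, RingHom.coe_coe, hS_left, map_sum, map_mul,
        reverseOp_of_mem_paravectors (hu _), reverseOp_of_mem_paravectors (hT _), Finset.op_sum,
        op_mul]
    have h2S : symSum u + symSum u ∈ paravectors Q := by
      nth_rewrite 1 [hS_left]
      rw [hS_right, ← Finset.sum_add_distrib]
      exact Submodule.sum_mem _ fun p _ => mul_add_mul_mem_paravectors (hu p) (hT p)
    rw [← invOf_two_smul_add_invOf_two_smul R (symSum u), ← smul_add]
    exact Submodule.smul_mem _ _ h2S

end CliffordAlgebra

theorem symE_mem_paravector_general {n ℓ : ℕ}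
    (u : Fin ℓ → CliffordAlgebra (Qneg n)) (hu : ∀ i, u i ∈ Paravector n) :
    symE u ∈ Paravector n :=
  Submodule.smul_mem _ _ (CliffordAlgebra.symSum_mem_paravectors u hu)

theorem symE_mem_paravector {n ℓ : ℕ} (hℓ : 1 ≤ ℓ)
    (u : Fin ℓ → CliffordAlgebra (Qneg n)) (hu : ∀ i, u i ∈ Paravector n) :
    symE u ∈ Paravector n :=
  symE_mem_paravector_general u hu
end

section
/- More generally, for paravectors u, v in Cl(0,n) and any m ∈ ℕ, ∫₀¹ (t u + (1−t) v)^m dt = (1/(m+1)) Σ_{k=0}^m E(u^k v^{m−k}), where E(u^k v^{m−k}) denotes the symmetrized product of k copies of u and m−k copies of v. -/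
open CliffordAlgebra

/-!
Expanding `(t u + (1 - t) v) ^ m` by multilinearity gives, for each set `s` of positions where
`u` is chosen, the word `w(s)` with coefficient `t ^ |s| (1 - t) ^ (m - |s|)`, whose integral is
the Beta value `|s|! (m - |s|)! / (m + 1)!`. On the other hand `S_m` acts transitively on the
`k`-subsets of `Fin m`, so averaging over `S_m` is averaging over the `k`-subsets: the symmetrized
product `E(u^k v^(m-k))` is the mean of the `choose m k` words `w(s)` with `|s| = k`. Since
`choose m k * k! (m - k)! / (m + 1)! = 1 / (m + 1)`, the two sides agree.
-/

open Finset Nat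

theorem integral_pow_mul_one_sub_pow (a b : ℕ) :
    ∫ t in (0:ℝ)..1, t ^ a * (1 - t) ^ b = a ! * b ! / (a + b + 1)! := by
  induction b generalizing a with
  | zero =>
    simp [integral_pow, factorial_succ, field]
  | succ b ih =>
    have hsplit : ∀ t : ℝ,
        t ^ a * (1 - t) ^ (b + 1) = t ^ a * (1 - t) ^ b - t ^ (a + 1) * (1 - t) ^ b :=
      fun t => by ring
    simp_rw [hsplit]
    rw [intervalIntegral.integral_sub ((by fun_prop : Continuous _).intervalIntegrable _ _)
        ((by fun_prop : Continuous _).intervalIntegrable _ _), ih, ih,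
      show a + 1 + b + 1 = a + (b + 1) + 1 by omega, show a + b + 1 = a + (b + 1) by omega,
      factorial_succ (a + (b + 1)), factorial_succ a, factorial_succ b]
    push_cast
    field_simp
    ring

theorem choose_mul_integral_pow_mul_one_sub_pow {m k : ℕ} (hk : k ≤ m) :
    (m.choose k : ℝ) * ∫ t in (0:ℝ)..1, t ^ k * (1 - t) ^ (m - k) = (m + 1 : ℝ)⁻¹ := by
  rw [integral_pow_mul_one_sub_pow, Nat.add_sub_cancel' hk, cast_choose ℝ hk, factorial_succ]
  push_cast
  field_simp

theorem Fintype.sum_finset_eq_sum_range_sum_powersetCard {α M : Type*} [Fintype α]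
    [DecidableEq α] [AddCommMonoid M] (f : Finset α → M) :
    ∑ s, f s = ∑ k ∈ range (Fintype.card α + 1), ∑ s ∈ powersetCard k univ, f s := by
  refine (sum_fiberwise_of_maps_to (g := Finset.card) (t := range (Fintype.card α + 1))
    (fun s _ => ?_) f).symm.trans ?_
  · exact mem_range.2 (Nat.lt_succ_of_le (card_le_univ s))
  · simp_rw [powersetCard_eq_filter, powerset_univ]

namespace MulAction

theorem card_nsmul_sum_smul_eq {G X M : Type*} [Group G] [Fintype G] [MulAction G X]
    [Fintype X] [IsPretransitive G X] [AddCommMonoid M] (F : X → M) (x : X) :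
    Fintype.card X • ∑ g : G, F (g • x) = Fintype.card G • ∑ y, F y := by
  have hbase : ∀ y, ∑ g : G, F (g • y) = ∑ g : G, F (g • x) := by
    intro y
    obtain ⟨h, rfl⟩ := exists_smul_eq G x y
    exact Fintype.sum_equiv (Equiv.mulRight h) _ _ fun g => by simp [mul_smul]
  calc Fintype.card X • ∑ g : G, F (g • x)
      = ∑ y : X, ∑ g : G, F (g • y) := by simp [hbase]
    _ = ∑ g : G, ∑ y : X, F (g • y) := sum_comm
    _ = ∑ g : G, ∑ y, F y :=
      sum_congr rfl fun g _ => Fintype.sum_equiv (toPerm g) _ _ fun _ => rfl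
    _ = Fintype.card G • ∑ y, F y := by simp

end MulAction

section Word

variable {A : Type*} [Semiring A] {m : ℕ}

def word (u v : A) (s : Finset (Fin m)) : A :=
  (List.ofFn (s.piecewise (fun _ => u) (fun _ => v))).prod

theorem add_pow_eq_sum_word (u v : A) (m : ℕ) :
    (u + v) ^ m = ∑ s : Finset (Fin m), word u v s := by
  rw [← MultilinearMap.mkPiAlgebraFin_apply_const (R := ℕ)]
  exact (MultilinearMap.mkPiAlgebraFin ℕ m A).map_add_univ _ _

theorem word_smul_smul {R : Type*} [CommSemiring R] [Algebra R A] (c d : R) (u v : A)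
    (s : Finset (Fin m)) :
    word (c • u) (d • v) s = (c ^ #s * d ^ (m - #s)) • word u v s := by
  have hletters : s.piecewise (fun _ => c • u) (fun _ => d • v)
      = fun i => s.piecewise (fun _ => c) (fun _ => d) i •
          s.piecewise (fun _ => u) (fun _ => v) i := by
    funext i
    by_cases hi : i ∈ s <;> simp [hi]
  have hcoeff : ∏ i, s.piecewise (fun _ => c) (fun _ => d) i = c ^ #s * d ^ (m - #s) := by
    rw [prod_piecewise, univ_inter, prod_const, prod_const, ← compl_eq_univ_sdiff, card_compl,
      Fintype.card_fin]
  rw [word, hletters, ← MultilinearMap.mkPiAlgebraFin_apply (R := R),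
    MultilinearMap.map_smul_univ, hcoeff]
  rfl

end Word

section Symmetrization

open scoped Pointwise

variable {A : Type*} [Ring A] [Algebra ℝ A]

theorem symE_comp_cast {ℓ ℓ' : ℕ} (h : ℓ' = ℓ) (u : Fin ℓ → A) :
    symE (u ∘ Fin.cast h) = symE u := by
  subst h; rfl

theorem choose_smul_symE_piecewise (u v : A) {m : ℕ} (s₀ : Finset (Fin m)) :
    (m.choose #s₀ : ℝ) • symE (s₀.piecewise (fun _ => u) (fun _ => v))
      = ∑ s ∈ powersetCard #s₀ (univ : Finset (Fin m)), word u v s := by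
  set k := #s₀
  have hperm : ∀ σ : Equiv.Perm (Fin m),
      (List.ofFn fun i => s₀.piecewise (fun _ => u) (fun _ => v) (σ i)).prod
        = word u v (σ⁻¹ • s₀) := by
    intro σ
    unfold word
    congr 2
    funext i
    simp [Finset.piecewise, mem_inv_smul_finset_iff]
  have hinv : ∑ σ : Equiv.Perm (Fin m), word u v (σ⁻¹ • s₀)
      = ∑ σ : Equiv.Perm (Fin m), word u v (σ • s₀) :=
    Fintype.sum_equiv (Equiv.inv _) _ _ fun _ => rfl
  have hsubtype : ∑ s : Set.powersetCard (Fin m) k, word u v (s : Finset (Fin m))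
      = ∑ s ∈ powersetCard k (univ : Finset (Fin m)), word u v s :=
    (sum_subtype _ (fun s => by simp [Set.powersetCard.mem_iff]) _).symm
  have hcard : Fintype.card (Set.powersetCard (Fin m) k) = m.choose k := by
    rw [Fintype.card_eq_nat_card, Set.powersetCard.card, Nat.card_eq_fintype_card,
      Fintype.card_fin]
  have := Set.powersetCard.isPretransitive (α := Fin m) (n := k)
  have horbit := MulAction.card_nsmul_sum_smul_eq (G := Equiv.Perm (Fin m))
    (fun s : Set.powersetCard (Fin m) k => word u v (s : Finset (Fin m))) ⟨s₀, rfl⟩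
  simp only [Set.powersetCard.coe_smul, hsubtype, Fintype.card_perm, Fintype.card_fin,
    hcard] at horbit
  rw [symE, smul_comm, Fintype.sum_congr _ _ hperm, hinv, Nat.cast_smul_eq_nsmul,
    horbit, ← Nat.cast_smul_eq_nsmul ℝ, inv_smul_smul₀ (by positivity)]

theorem symL_replicate_append_replicate (u v : A) {k m : ℕ} (hk : k ≤ m) :
    symL (List.replicate k u ++ List.replicate (m - k) v)
      = symE (({i | (i : ℕ) < k} : Finset (Fin m)).piecewise (fun _ => u) (fun _ => v)) := by
  have hlen : (List.replicate k u ++ List.replicate (m - k) v).length = m := by simp; omega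
  rw [show symL _ = symE (List.replicate k u ++ List.replicate (m - k) v).get from rfl,
    ← symE_comp_cast hlen.symm]
  congr 1
  funext i
  by_cases hi : (i : ℕ) < k
  · simp [hi, List.getElem_append_left]
  · simp only [Function.comp_apply, List.get_eq_getElem, Fin.val_cast]
    rw [List.getElem_append_right (by simpa using hi)]
    simp [hi]

theorem sum_powersetCard_word (u v : A) {k m : ℕ} (hk : k ≤ m) :
    ∑ s ∈ powersetCard k (univ : Finset (Fin m)), word u v s
      = (m.choose k : ℝ) • symL (List.replicate k u ++ List.replicate (m - k) v) := by
  have hcard : #{i : Fin m | (i : ℕ) < k} = k := by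
    rw [Fin.card_filter_val_lt, min_eq_right hk]
  have h := choose_smul_symE_piecewise u v {i : Fin m | (i : ℕ) < k}
  rw [hcard] at h
  rw [symL_replicate_append_replicate u v hk]
  exact h.symm

end Symmetrization

theorem integral_pow_segment_general {A : Type*} [NormedRing A] [NormedAlgebra ℝ A]
    [CompleteSpace A] (u v : A) (m : ℕ) :
    ∫ t in (0:ℝ)..1, (t • u + (1 - t) • v) ^ m
      = ((m + 1 : ℝ))⁻¹ •
          ∑ k ∈ Finset.range (m + 1),
            symL (List.replicate k u ++ List.replicate (m - k) v) := by
  calc ∫ t in (0:ℝ)..1, (t • u + (1 - t) • v) ^ m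
      = ∫ t in (0:ℝ)..1, ∑ s : Finset (Fin m),
          (t ^ #s * (1 - t) ^ (m - #s)) • word u v s := by
        simp_rw [add_pow_eq_sum_word, word_smul_smul]
    _ = ∑ s : Finset (Fin m),
          (∫ t in (0:ℝ)..1, t ^ #s * (1 - t) ^ (m - #s)) • word u v s := by
        rw [intervalIntegral.integral_finsetSum fun s _ =>
          ((by fun_prop : Continuous _).intervalIntegrable _ _)]
        simp_rw [intervalIntegral.integral_smul_const]
    _ = ∑ k ∈ range (m + 1), (∫ t in (0:ℝ)..1, t ^ k * (1 - t) ^ (m - k)) •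
          ∑ s ∈ powersetCard k (univ : Finset (Fin m)), word u v s := by
        rw [Fintype.sum_finset_eq_sum_range_sum_powersetCard, Fintype.card_fin]
        refine sum_congr rfl fun k _ => ?_
        rw [smul_sum]
        exact sum_congr rfl fun s hs => by rw [(mem_powersetCard.1 hs).2]
    _ = _ := by
        rw [smul_sum]
        refine sum_congr rfl fun k hk => ?_
        have hk : k ≤ m := Nat.lt_succ_iff.1 (mem_range.1 hk)
        rw [sum_powersetCard_word u v hk, smul_smul, mul_comm,
          choose_mul_integral_pow_mul_one_sub_pow hk]

theorem integral_pow_segment {n : ℕ} {A : Type*} [NormedRing A] [NormedAlgebra ℝ A]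
    [CompleteSpace A] (e : CliffordAlgebra (Qneg n) ≃ₐ[ℝ] A)
    (u v : A) (hu : e.symm u ∈ Paravector n) (hv : e.symm v ∈ Paravector n) (m : ℕ) :
    ∫ t in (0:ℝ)..1, (t • u + (1 - t) • v) ^ m
      = ((m + 1 : ℝ))⁻¹ •
          ∑ k ∈ Finset.range (m + 1),
            symL (List.replicate k u ++ List.replicate (m - k) v) :=
  integral_pow_segment_general u v m
end

section
/- Derivation rule: for a paravector u ∈ S ⊕ V, an element a ∈ Cl(0,n), and p ∈ ℕ with p ≥ 1, the directional derivative (u|∇_x) applied to x ↦ Sym(a x^p) (x ranging over paravectors) equals p · Sym(a u x^{p−1}), where Sym(a x^p) denotes the symmetrized product of a with p copies of x. For p = 0 the derivative is 0. -/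
open CliffordAlgebra

/-- the paravector with coordinates `c : Fin (n+1) → ℝ`, transported to `A`. -/
noncomputable def pv {n : ℕ} {A : Type*} [NormedRing A] [NormedAlgebra ℝ A]
    (e : CliffordAlgebra (Qneg n) ≃ₐ[ℝ] A) (c : Fin (n + 1) → ℝ) : A :=
  e (algebraMap ℝ (CliffordAlgebra (Qneg n)) (c 0) + ι (Qneg n) (fun i => c i.succ))

/-!
`symE` is the evaluation of a continuous multilinear map, so the Leibniz rule expresses the
derivative of `Sym(a x^p)` as the sum over the `p + 1` slots of the symmetrized product with that
slot replaced by its derivative. The slot of the constant `a` contributes `0`; each of the `p`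
slots of `x` contributes `Sym(a u x^(p-1))`, since `Sym` is invariant under permutations of its
arguments.
-/

section SymmetrizedProduct

variable {A : Type*}

theorem symE_comp_perm [Ring A] [Algebra ℝ A] {ℓ : ℕ} (u : Fin ℓ → A) (π : Equiv.Perm (Fin ℓ)) :
    symE (u ∘ π) = symE u := by
  unfold symE
  congr 1
  exact Equiv.sum_comp (Equiv.mulLeft π) (fun σ => (List.ofFn fun i => u (σ i)).prod)

theorem symE_cons_comp_perm [Ring A] [Algebra ℝ A] {m : ℕ} (a : A) (v : Fin m → A)
    (π : Equiv.Perm (Fin m)) :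
    symE (Fin.cons a (v ∘ π) : Fin (m + 1) → A) = symE (Fin.cons a v : Fin (m + 1) → A) := by
  rw [← symE_comp_perm (Fin.cons a v : Fin (m + 1) → A) (Equiv.Perm.decomposeFin.symm (0, π))]
  congr 1
  funext i
  refine Fin.cases rfl (fun i => ?_) i
  simp

theorem symL_ofFn [Ring A] [Algebra ℝ A] {ℓ : ℕ} (u : Fin ℓ → A) :
    symL (List.ofFn u) = symE u := by
  suffices ∀ L : List A, (h : L.length = ℓ) → (∀ i, L.get (Fin.cast h.symm i) = u i) →
      symL L = symE u from this _ List.length_ofFn (fun i => by simp)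
  rintro L rfl hu
  rw [show u = L.get from funext fun i => (hu i).symm]
  rfl

theorem Fin.update_const_eq_cons_comp_swap {α : Type*} {q : ℕ} (U X : α) (j : Fin (q + 1)) :
    Function.update (fun _ => X) j U = (Fin.cons U fun _ => X) ∘ Equiv.swap 0 j := by
  have hcons : (Fin.cons U fun _ => X : Fin (q + 1) → α) = Function.update (fun _ => X) 0 U := by
    funext i
    refine Fin.cases (by simp) (fun i => ?_) i
    simp
  rw [hcons, Function.update_comp_equiv, Equiv.symm_swap, Equiv.swap_apply_left]
  rfl

theorem symE_cons_update_const [Ring A] [Algebra ℝ A] {q : ℕ} (a U X : A) (j : Fin (q + 1)) :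
    symE (Fin.cons a (Function.update (fun _ => X) j U) : Fin (q + 2) → A)
      = symE (Fin.cons a (Fin.cons U fun _ => X) : Fin (q + 2) → A) := by
  rw [Fin.update_const_eq_cons_comp_swap, symE_cons_comp_perm]

variable [NormedRing A] [NormedAlgebra ℝ A]

variable (A) in
noncomputable def symCML (ℓ : ℕ) : ContinuousMultilinearMap ℝ (fun _ : Fin ℓ => A) A :=
  ((ℓ.factorial : ℝ)⁻¹) •
    ∑ σ : Equiv.Perm (Fin ℓ), (ContinuousMultilinearMap.mkPiAlgebraFin ℝ ℓ A).domDomCongr σ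

@[simp]
theorem symCML_apply {ℓ : ℕ} (u : Fin ℓ → A) : symCML A ℓ u = symE u := by
  simp [symCML, symE]

theorem symE_update_zero {ℓ : ℕ} (v : Fin ℓ → A) (i : Fin ℓ) :
    symE (Function.update v i 0) = 0 := by
  rw [← symCML_apply]
  exact (symCML A ℓ).map_coord_zero i (by simp)

end SymmetrizedProduct

section Derivative

variable {E A : Type*} [NormedAddCommGroup E] [NormedSpace ℝ E] [NormedRing A] [NormedAlgebra ℝ A]

theorem fderiv_symE_apply {ℓ : ℕ} {g : Fin ℓ → E → A} {g' : Fin ℓ → E →L[ℝ] A} {x : E}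
    (hg : ∀ i, HasFDerivAt (g i) (g' i) x) (u : E) :
    fderiv ℝ (fun c => symE fun i => g i c) x u
      = ∑ i, symE (Function.update (fun j => g j x) i (g' i u)) := by
  simp_rw [← symCML_apply]
  rw [(HasFDerivAt.multilinear_comp (symCML A ℓ) hg).fderiv]
  simp

theorem fderiv_symL_cons_replicate {f : E → A} {x : E} (hf : DifferentiableAt ℝ f x) (a : A)
    (q : ℕ) (u : E) :
    fderiv ℝ (fun c => symL (a :: List.replicate (q + 1) (f c))) x u
      = ((q + 1 : ℕ) : ℝ) • symL (a :: fderiv ℝ f x u :: List.replicate q (f x)) := by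
  let g : Fin (q + 2) → E → A := Fin.cons (fun _ => a) fun _ => f
  let g' : Fin (q + 2) → E →L[ℝ] A := Fin.cons 0 fun _ => fderiv ℝ f x
  have hg : ∀ i, HasFDerivAt (g i) (g' i) x :=
    Fin.cases (hasFDerivAt_const a x) fun _ => hf.hasFDerivAt
  have hg_apply : ∀ c, (fun i => g i c) = Fin.cons a fun _ => f c :=
    fun c => funext (Fin.cases rfl fun _ => rfl)
  have hlhs : ∀ c, a :: List.replicate (q + 1) (f c) = List.ofFn fun i => g i c := by
    intro c
    rw [hg_apply, List.ofFn_succ]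
    simp only [Fin.cons_zero, Fin.cons_succ, List.ofFn_const]
  have hrhs : a :: fderiv ℝ f x u :: List.replicate q (f x)
      = List.ofFn (Fin.cons a (Fin.cons (fderiv ℝ f x u) fun _ => f x) : Fin (q + 2) → A) := by
    rw [List.ofFn_succ, List.ofFn_succ]
    simp only [Fin.cons_zero, Fin.cons_succ, List.ofFn_const]
  have hsucc : ∀ j : Fin (q + 1), symE (Function.update (fun i => g i x) j.succ (g' j.succ u))
      = symE (Fin.cons a (Fin.cons (fderiv ℝ f x u) fun _ => f x) : Fin (q + 2) → A) := by
    intro j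
    rw [← symE_cons_update_const a _ (f x) j, Fin.cons_update, hg_apply]
    rfl
  simp_rw [hlhs, hrhs, symL_ofFn]
  rw [fderiv_symE_apply hg, Fin.sum_univ_succ]
  simp only [g', Fin.cons_zero, zero_apply, symE_update_zero, hsucc,
    Finset.sum_const, Finset.card_univ, Fintype.card_fin, zero_add]
  rw [← Nat.cast_smul_eq_nsmul ℝ]

end Derivative

section Paravector

variable {n : ℕ} {A : Type*} [NormedRing A] [NormedAlgebra ℝ A]

noncomputable def pvCLM (e : CliffordAlgebra (Qneg n) ≃ₐ[ℝ] A) : (Fin (n + 1) → ℝ) →L[ℝ] A :=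
  LinearMap.toContinuousLinearMap <| e.toLinearMap ∘ₗ
    (Algebra.linearMap ℝ _ ∘ₗ LinearMap.proj 0 + ι (Qneg n) ∘ₗ LinearMap.funLeft ℝ ℝ Fin.succ)

theorem coe_pvCLM (e : CliffordAlgebra (Qneg n) ≃ₐ[ℝ] A) : ⇑(pvCLM e) = pv e := by
  funext c
  simp [pvCLM, pv, LinearMap.funLeft, Function.comp_def]

end Paravector

theorem directional_derivative_symL_general {n : ℕ} {A : Type*} [NormedRing A]
    [NormedAlgebra ℝ A] (e : CliffordAlgebra (Qneg n) ≃ₐ[ℝ] A)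
    (a : A) (x u : Fin (n + 1) → ℝ) :
    (∀ p : ℕ, 1 ≤ p →
      fderiv ℝ (fun c : Fin (n + 1) → ℝ => symL (a :: List.replicate p (pv e c))) x u
        = (p : ℝ) • symL (a :: pv e u :: List.replicate (p - 1) (pv e x)))
    ∧ fderiv ℝ (fun c : Fin (n + 1) → ℝ => symL (a :: List.replicate 0 (pv e c))) x u
        = 0 := by
  refine ⟨fun p hp => ?_, by simp⟩
  obtain ⟨q, rfl⟩ := Nat.exists_eq_add_of_le' hp
  rw [← coe_pvCLM, fderiv_symL_cons_replicate (pvCLM e).differentiableAt,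
    ContinuousLinearMap.fderiv, Nat.add_sub_cancel]

theorem directional_derivative_symL {n : ℕ} {A : Type*} [NormedRing A]
    [NormedAlgebra ℝ A] [CompleteSpace A] (e : CliffordAlgebra (Qneg n) ≃ₐ[ℝ] A)
    (a : A) (x u : Fin (n + 1) → ℝ) :
    (∀ p : ℕ, 1 ≤ p →
      fderiv ℝ (fun c : Fin (n + 1) → ℝ => symL (a :: List.replicate p (pv e c))) x u
        = (p : ℝ) • symL (a :: pv e u :: List.replicate (p - 1) (pv e x)))
    ∧ fderiv ℝ (fun c : Fin (n + 1) → ℝ => symL (a :: List.replicate 0 (pv e c))) x u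
        = 0 :=
  directional_derivative_symL_general e a x u
end

section
/- Resolvent difference identity: for paravectors a, b, x in Cl(0,n) such that x − (t a + (1−t) b) is invertible for all t ∈ [0,1], we have (x − a)^{-1} − (x − b)^{-1} = ∫₀¹ (x − (t a + (1−t) b))^{-1} (a − b) (x − (t a + (1−t) b))^{-1} dt. -/
open CliffordAlgebra

/-! The resolvent identity is the fundamental theorem of calculus for `t ↦ (x - c t)⁻¹` along the
segment `c t = t a + (1 - t) b`, whose derivative is `(x - c t)⁻¹ (a - b) (x - c t)⁻¹` by the
derivative `h ↦ -u⁻¹ h u⁻¹` of inversion at a unit `u`. -/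

open Set

section RingInverse

variable {A : Type*} [NormedRing A] [NormedAlgebra ℝ A]

theorem HasDerivAt.ringInverse [HasSummableGeomSeries A] {g : ℝ → A} {g' : A} {t : ℝ}
    (hg : HasDerivAt g g' t) (ht : IsUnit (g t)) :
    HasDerivAt (fun s => Ring.inverse (g s))
      (-(Ring.inverse (g t) * g' * Ring.inverse (g t))) t := by
  obtain ⟨u, hu⟩ := ht
  have hinv := hasFDerivAt_ringInverse (𝕜 := ℝ) u
  rw [hu] at hinv
  exact (hinv.comp_hasDerivAt t hg).congr_deriv (by simp [← hu])

theorem ringInverse_sub_ringInverse_eq_integral [CompleteSpace A] {g g' : ℝ → A} {a b : ℝ}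
    (hg : ∀ t ∈ uIcc a b, HasDerivAt g (g' t) t) (hg' : ContinuousOn g' (uIcc a b))
    (hunit : ∀ t ∈ uIcc a b, IsUnit (g t)) :
    Ring.inverse (g b) - Ring.inverse (g a)
      = ∫ t in a..b, -(Ring.inverse (g t) * g' t * Ring.inverse (g t)) := by
  have hderiv : ∀ t ∈ uIcc a b, HasDerivAt (fun s => Ring.inverse (g s))
      (-(Ring.inverse (g t) * g' t * Ring.inverse (g t))) t :=
    fun t ht => (hg t ht).ringInverse (hunit t ht)
  have hinv_cont : ContinuousOn (fun s => Ring.inverse (g s)) (uIcc a b) :=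
    fun t ht => (hderiv t ht).continuousAt.continuousWithinAt
  refine (intervalIntegral.integral_eq_sub_of_hasDerivAt hderiv ?_).symm
  exact ((hinv_cont.mul hg').mul hinv_cont).neg.intervalIntegrable

end RingInverse

theorem resolvent_difference_general {A : Type*} [NormedRing A] [NormedAlgebra ℝ A]
    [CompleteSpace A]
    (a b x : A)
    (hunit : ∀ t ∈ Set.Icc (0:ℝ) 1, IsUnit (x - (t • a + (1 - t) • b))) :
    Ring.inverse (x - a) - Ring.inverse (x - b)
      = ∫ t in (0:ℝ)..1,
          Ring.inverse (x - (t • a + (1 - t) • b)) * (a - b) *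
            Ring.inverse (x - (t • a + (1 - t) • b)) := by
  have hsegment (t : ℝ) :
      HasDerivAt (fun s : ℝ => x - (s • a + (1 - s) • b)) (-(a - b)) t := by
    have hline :=
      ((hasDerivAt_id t).smul_const a).add (((hasDerivAt_id t).const_sub 1).smul_const b)
    exact (hline.const_sub x).congr_deriv (by simp only [one_smul, neg_smul]; abel)
  have hdiff := ringInverse_sub_ringInverse_eq_integral (fun t _ => hsegment t) continuousOn_const
    (by rwa [uIcc_of_le zero_le_one])
  simpa only [one_smul, zero_smul, sub_self, sub_zero, add_zero, zero_add, mul_neg, neg_mul,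
    neg_neg] using hdiff

theorem resolvent_difference {n : ℕ} {A : Type*} [NormedRing A] [NormedAlgebra ℝ A]
    [CompleteSpace A] (e : CliffordAlgebra (Qneg n) ≃ₐ[ℝ] A)
    (a b x : A) (ha : e.symm a ∈ Paravector n) (hb : e.symm b ∈ Paravector n)
    (hx : e.symm x ∈ Paravector n)
    (hunit : ∀ t ∈ Set.Icc (0:ℝ) 1, IsUnit (x - (t • a + (1 - t) • b))) :
    Ring.inverse (x - a) - Ring.inverse (x - b)
      = ∫ t in (0:ℝ)..1,
          Ring.inverse (x - (t • a + (1 - t) • b)) * (a - b) *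
            Ring.inverse (x - (t • a + (1 - t) • b)) :=
  resolvent_difference_general a b x hunit
end
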